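/- arXiv:math/0509207 — 3 statements merged into one kernel-verified Lean document; each statement's English description precedes it below -/
import Mathlib

section
/- Let f, g be standard real-rooted polynomials with g ⪯ f and a, b, c, d ≥ 0. If af − bg is standard, then cf + dg ⪯ af − bg; in particular f ⪯ af − bg and g ⪯ af − bg. -/
open Polynomial Finset

/-- A real polynomial has only real zeros (all its zeros are real):
the number of real roots (with multiplicity) equals the degree. -/
def RealRooted (f : Polynomial ℝ) : Prop := f.roots.card = f.natDegree

/-- A real polynomial is standard if it is zero or has positive leading coefficient. -/
def Standard (f : Polynomial ℝ) : Prop := f = 0 ∨ 0 < f.leadingCoeff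

/-- `g` alternates left of `f`: both have the same degree `n`, both are real-rooted,
and with zeros listed in nonincreasing order `r 0 ≥ r 1 ≥ …` (for `f`) and
`s 0 ≥ s 1 ≥ …` (for `g`) we have `s n ≤ r n ≤ s (n-1) ≤ … ≤ s 0 ≤ r 0`. -/
def AltLeft (g f : Polynomial ℝ) : Prop :=
  ∃ n : ℕ, ∃ r s : Fin n → ℝ,
    f = Polynomial.C f.leadingCoeff * ∏ i, (Polynomial.X - Polynomial.C (r i)) ∧
    g = Polynomial.C g.leadingCoeff * ∏ i, (Polynomial.X - Polynomial.C (s i)) ∧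
    (∀ i : Fin n, s i ≤ r i) ∧
    (∀ (i : ℕ) (h : i + 1 < n), r ⟨i + 1, h⟩ ≤ s ⟨i, Nat.lt_of_succ_lt h⟩)

/-- `g` interlaces `f`: `deg f = deg g + 1` and the zeros weakly interleave. -/
def Interlaces (g f : Polynomial ℝ) : Prop :=
  ∃ n : ℕ, ∃ r : Fin (n + 1) → ℝ, ∃ s : Fin n → ℝ,
    f = Polynomial.C f.leadingCoeff * ∏ i, (Polynomial.X - Polynomial.C (r i)) ∧
    g = Polynomial.C g.leadingCoeff * ∏ i, (Polynomial.X - Polynomial.C (s i)) ∧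
    ∀ i : Fin n, r i.succ ≤ s i ∧ s i ≤ r i.castSucc

/-- `g ⪯ f` : `g` alternates left of `f` or `g` interlaces `f`. -/
def Prec (g f : Polynomial ℝ) : Prop := AltLeft g f ∨ Interlaces g f

/-- strict alternation -/
def StrictAltLeft (g f : Polynomial ℝ) : Prop :=
  ∃ n : ℕ, ∃ r s : Fin n → ℝ,
    f = Polynomial.C f.leadingCoeff * ∏ i, (Polynomial.X - Polynomial.C (r i)) ∧
    g = Polynomial.C g.leadingCoeff * ∏ i, (Polynomial.X - Polynomial.C (s i)) ∧
    (∀ i : Fin n, s i < r i) ∧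
    (∀ (i : ℕ) (h : i + 1 < n), r ⟨i + 1, h⟩ < s ⟨i, Nat.lt_of_succ_lt h⟩)

/-- strict interlacing -/
def StrictInterlaces (g f : Polynomial ℝ) : Prop :=
  ∃ n : ℕ, ∃ r : Fin (n + 1) → ℝ, ∃ s : Fin n → ℝ,
    f = Polynomial.C f.leadingCoeff * ∏ i, (Polynomial.X - Polynomial.C (r i)) ∧
    g = Polynomial.C g.leadingCoeff * ∏ i, (Polynomial.X - Polynomial.C (s i)) ∧
    ∀ i : Fin n, r i.succ < s i ∧ s i < r i.castSucc

/-- `g ≺ f` : strict alternation or strict interlacing. -/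
def SPrec (g f : Polynomial ℝ) : Prop := StrictAltLeft g f ∨ StrictInterlaces g f

/-- PF: nonnegative coefficients and only real zeros. -/
def PFpoly (f : Polynomial ℝ) : Prop := (∀ i, 0 ≤ f.coeff i) ∧ RealRooted f

/-!
Encode `g ⪯ f` by counting roots: above every threshold `x`, `f` has as many roots as `g` or
one more. A common root of `f` and `g` factors out of `f`, `g`, `a f - b g` and `c f + d g` alike
and leaves this counting relation unchanged, so it suffices to treat `f` and `g` without common
roots, where the interlacing `r₀ > s₀ > r₁ > s₁ > ⋯` is strict. There the signs of `f` at the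
roots of `g`, and of `g` at the roots of `f`, alternate; by the intermediate value theorem
`a f - b g` has a root in `(r₀, ∞)` and in each `(rₖ, sₖ₋₁)`, and `c f + d g` one in each
`(sₖ, rₖ)` (and one below `rₙ` when `deg f = deg g + 1`). By degree these are all the roots,
which gives `f, g ⪯ a f - b g` and `g ⪯ c f + d g ⪯ f`, hence `c f + d g ⪯ a f - b g`.
-/

/-- `⪯` on root multisets, in counting form. -/
def RootsPrec (S R : Multiset ℝ) : Prop :=
  ∀ x : ℝ, S.countP (x ≤ ·) ≤ R.countP (x ≤ ·) ∧ R.countP (x ≤ ·) ≤ S.countP (x ≤ ·) + 1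

namespace RootsPrec

theorem refl (U : Multiset ℝ) : RootsPrec U U := fun _ => ⟨le_rfl, Nat.le_succ _⟩

theorem cons_iff {S R : Multiset ℝ} (w : ℝ) :
    RootsPrec (w ::ₘ S) (w ::ₘ R) ↔ RootsPrec S R := by
  refine forall_congr' fun x => ?_
  simp only [Multiset.countP_cons]
  omega

theorem of_between {S V R T : Multiset ℝ} (hSV : RootsPrec S V) (hVR : RootsPrec V R)
    (hRT : RootsPrec R T) (hST : RootsPrec S T) : RootsPrec V T := fun x => by
  have := hSV x; have := hVR x; have := hRT x; have := hST x
  omega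

@[elab_as_elim]
theorem induction_on_common_root {P : Multiset ℝ → Multiset ℝ → Prop}
    (S R : Multiset ℝ) (hSR : RootsPrec S R)
    (disjoint : ∀ S R, RootsPrec S R → Disjoint S R → P S R)
    (cons : ∀ w S R, RootsPrec S R → P S R → P (w ::ₘ S) (w ::ₘ R)) : P S R := by
  revert R
  induction hn : Multiset.card S using Nat.strong_induction_on generalizing S with
  | _ n ih =>
  intro R hSR
  by_cases hdisj : Disjoint S R
  · exact disjoint S R hSR hdisj
  obtain ⟨w, hwS, hwR⟩ : ∃ w ∈ S, w ∈ R := by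
    simpa [Multiset.disjoint_left] using hdisj
  rw [← Multiset.cons_erase hwS, ← Multiset.cons_erase hwR] at hSR ⊢
  rw [cons_iff] at hSR
  exact cons w _ _ hSR (ih _ (hn ▸ Multiset.card_erase_lt_of_mem hwS) _ rfl _ hSR)

end RootsPrec

theorem List.le_getElem_iff_lt_countP {l : List ℝ} (hl : l.Pairwise (· ≥ ·)) {k : ℕ}
    (hk : k < l.length) (x : ℝ) : x ≤ l[k] ↔ k < l.countP (fun a => decide (x ≤ a)) := by
  induction l generalizing k with
  | nil => simp at hk
  | cons a l ih =>
    rw [List.pairwise_cons] at hl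
    rw [List.countP_cons]
    by_cases hxa : x ≤ a
    · cases k with
      | zero => simp [hxa]
      | succ j => simp [hxa, ih hl.2 (Nat.lt_of_succ_lt_succ hk)]
    · have hlt : ∀ b ∈ l, b < x := fun b hb => lt_of_le_of_lt (hl.1 b hb) (not_le.mp hxa)
      have h0 : l.countP (fun b => decide (x ≤ b)) = 0 :=
        List.countP_eq_zero.mpr fun b hb => by simpa using hlt b hb
      cases k with
      | zero => simpa [hxa] using hlt
      | succ j => simpa [hxa, h0] using hlt _ (List.getElem_mem _)

/-- `r` lists `U` in nonincreasing order: `r k` is the `(k + 1)`-st largest element. -/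
def DescEnum (U : Multiset ℝ) (r : ℕ → ℝ) : Prop :=
  U = (range (Multiset.card U)).val.map r ∧
    ∀ k < Multiset.card U, ∀ x, x ≤ r k ↔ k < U.countP (x ≤ ·)

theorem exists_descEnum (U : Multiset ℝ) : ∃ r, DescEnum U r := by
  obtain ⟨l, rfl, hl⟩ : ∃ l : List ℝ, ↑l = U ∧ l.Pairwise (· ≥ ·) :=
    ⟨_, U.sort_eq _, U.pairwise_sort _⟩
  refine ⟨fun k => l.getD k 0, ?_, fun k hk x => ?_⟩
  · rw [Multiset.coe_card, range_val, Multiset.range, Multiset.map_coe]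
    congr 1
    refine List.ext_getElem (by simp) fun i h1 _ => ?_
    simp [List.getElem?_eq_getElem h1]
  · rw [Multiset.coe_card] at hk
    show x ≤ l.getD k 0 ↔ _
    rw [Multiset.coe_countP, List.getD_eq_getElem _ _ hk]
    exact List.le_getElem_iff_lt_countP hl hk x

namespace DescEnum

variable {U : Multiset ℝ} {r : ℕ → ℝ}

theorem mem (hr : DescEnum U r) {k : ℕ} (hk : k < Multiset.card U) : r k ∈ U := by
  rw [hr.1]
  exact Multiset.mem_map_of_mem r (mem_range.mpr hk)

theorem countP_eq_zero (hr : DescEnum U r) {x : ℝ} (hx : 0 < Multiset.card U → r 0 < x) :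
    U.countP (x ≤ ·) = 0 := by
  by_contra h
  have hpos := Nat.pos_of_ne_zero h
  have hcard := hpos.trans_le (Multiset.countP_le_card _ _)
  exact absurd ((hr.2 0 hcard x).mpr hpos) (not_le.mpr (hx hcard))

end DescEnum

theorem rootsPrec_map_range {n m : ℕ} (hnm : n ≤ m) (hmn : m ≤ n + 1) {w u : ℕ → ℝ}
    (hwu : ∀ k < n, w k ≤ u k) (huw : ∀ k, k + 1 < m → u (k + 1) ≤ w k) :
    RootsPrec ((range n).val.map w) ((range m).val.map u) := fun x => by
  have hcount : ∀ (N : ℕ) (v : ℕ → ℝ),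
      ((range N).val.map v).countP (x ≤ ·) = ((range N).filter (x ≤ v ·)).card := by
    intro N v
    rw [Multiset.countP_map]
    rfl
  rw [hcount, hcount]
  constructor
  · refine card_le_card fun k hk => ?_
    simp only [mem_filter, mem_range] at hk ⊢
    exact ⟨by omega, hk.2.trans (hwu k hk.1)⟩
  · calc ((range m).filter (x ≤ u ·)).card
        ≤ (insert 0 (((range n).filter (x ≤ w ·)).image (· + 1))).card := by
          refine card_le_card fun k hk => ?_
          simp only [mem_filter, mem_range] at hk
          rcases k with _ | k
          · exact mem_insert_self _ _
          · refine mem_insert_of_mem (mem_image.mpr ⟨k, ?_, rfl⟩)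
            simp only [mem_filter, mem_range]
            exact ⟨by omega, hk.2.trans (huw k hk.1)⟩
      _ ≤ ((range n).filter (x ≤ w ·)).card + 1 :=
          (card_insert_le _ _).trans (Nat.add_le_add_right card_image_le _)

section Enumerations

variable {S R : Multiset ℝ} {s r : ℕ → ℝ}

theorem RootsPrec.interlace (h : RootsPrec S R) (hs : DescEnum S s) (hr : DescEnum R r) :
    Multiset.card S ≤ Multiset.card R ∧ Multiset.card R ≤ Multiset.card S + 1 ∧
      (∀ k < Multiset.card S, s k ≤ r k) ∧ ∀ k, k + 1 < Multiset.card R → r (k + 1) ≤ s k := by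
  have hScard := fun x => Multiset.countP_le_card (x ≤ ·) S
  have hRcard := fun x => Multiset.countP_le_card (x ≤ ·) R
  have hsr : ∀ k < Multiset.card S, s k ≤ r k := fun k hk => by
    have := (hs.2 k hk (s k)).mp le_rfl
    have := h (s k); have := hRcard (s k)
    exact (hr.2 k (by omega) (s k)).mpr (by omega)
  have hrs : ∀ k, k + 1 < Multiset.card R → r (k + 1) ≤ s k := fun k hk => by
    have := (hr.2 (k + 1) hk (r (k + 1))).mp le_rfl
    have := h (r (k + 1)); have := hScard (r (k + 1))
    exact (hs.2 k (by omega) (r (k + 1))).mpr (by omega)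
  refine ⟨?_, ?_, hsr, hrs⟩
  · by_contra! hlt
    have := (hs.2 _ hlt (s (Multiset.card R))).mp le_rfl
    have := h (s (Multiset.card R)); have := hRcard (s (Multiset.card R))
    omega
  · by_contra! hlt
    have := (hr.2 _ hlt (r (Multiset.card S + 1))).mp le_rfl
    have := h (r (Multiset.card S + 1)); have := hScard (r (Multiset.card S + 1))
    omega

theorem RootsPrec.strict_interlace (h : RootsPrec S R) (hdisj : Disjoint S R)
    (hs : DescEnum S s) (hr : DescEnum R r) :
    Multiset.card S ≤ Multiset.card R ∧ Multiset.card R ≤ Multiset.card S + 1 ∧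
      (∀ k < Multiset.card S, s k < r k) ∧ ∀ k, k + 1 < Multiset.card R → r (k + 1) < s k := by
  obtain ⟨hnm, hmn, hsr, hrs⟩ := h.interlace hs hr
  refine ⟨hnm, hmn, fun k hk => (hsr k hk).lt_of_ne fun he => ?_,
    fun k hk => (hrs k hk).lt_of_ne fun he => ?_⟩
  · exact Multiset.disjoint_left.mp hdisj (hs.mem hk) (he ▸ hr.mem (by omega))
  · exact Multiset.disjoint_left.mp hdisj (hs.mem (by omega)) (he ▸ hr.mem hk)

end Enumerations

/-- Every `U` qualifies for `p = 0`. -/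
def SplitsWithRoots (p : ℝ[X]) (U : Multiset ℝ) : Prop :=
  p = C p.leadingCoeff * (U.map (X - C ·)).prod

theorem leadingCoeff_C_mul_prod_X_sub_C (a : ℝ) (U : Multiset ℝ) :
    (C a * (U.map (X - C ·)).prod).leadingCoeff = a := by
  rw [leadingCoeff_mul_monic (monic_multiset_prod_of_monic _ _ fun b _ => monic_X_sub_C b),
    leadingCoeff_C]

theorem splitsWithRoots_C_mul_prod_X_sub_C (a : ℝ) (U : Multiset ℝ) :
    SplitsWithRoots (C a * (U.map (X - C ·)).prod) U := by
  rw [SplitsWithRoots, leadingCoeff_C_mul_prod_X_sub_C]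

theorem splitsWithRoots_map_range_iff {p : ℝ[X]} {m : ℕ} (u : ℕ → ℝ) :
    SplitsWithRoots p ((range m).val.map u) ↔
      p = C p.leadingCoeff * ∏ i : Fin m, (X - C (u i)) := by
  rw [SplitsWithRoots, Fin.prod_univ_eq_prod_range (fun k => X - C (u k)), prod_eq_multiset_prod,
    Multiset.map_map]
  rfl

theorem splitsWithRoots_of_eq_prod_fin {p : ℝ[X]} {m : ℕ} {r : Fin m → ℝ}
    (h : p = C p.leadingCoeff * ∏ i, (X - C (r i))) :
    SplitsWithRoots p ((range m).val.map fun k => if hk : k < m then r ⟨k, hk⟩ else 0) := by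
  rw [splitsWithRoots_map_range_iff]
  simpa using h

namespace SplitsWithRoots

variable {p : ℝ[X]} {U : Multiset ℝ}

theorem X_sub_C_mul (h : SplitsWithRoots p U) (w : ℝ) :
    SplitsWithRoots ((X - C w) * p) (w ::ₘ U) := by
  rw [SplitsWithRoots, leadingCoeff_mul, leadingCoeff_X_sub_C, one_mul, Multiset.map_cons,
    Multiset.prod_cons]
  conv_lhs => rw [h]
  ring

theorem C_mul_eq (h : SplitsWithRoots p U) (a : ℝ) :
    C a * p = C (a * p.leadingCoeff) * (U.map (X - C ·)).prod := by
  conv_lhs => rw [h]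
  rw [C_mul, mul_assoc]

end SplitsWithRoots

theorem Prec.exists_rootsPrec {f g : ℝ[X]} (h : Prec g f) :
    ∃ R S, SplitsWithRoots f R ∧ SplitsWithRoots g S ∧ RootsPrec S R := by
  rcases h with ⟨n, r, s, hf, hg, hsr, hrs⟩ | ⟨n, r, s, hf, hg, hrsr⟩
  · refine ⟨_, _, splitsWithRoots_of_eq_prod_fin hf, splitsWithRoots_of_eq_prod_fin hg,
      rootsPrec_map_range le_rfl (Nat.le_succ n) (fun k hk => ?_) (fun k hk => ?_)⟩
    · simpa [hk] using hsr ⟨k, hk⟩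
    · simpa [hk, Nat.lt_of_succ_lt hk] using hrs k hk
  · refine ⟨_, _, splitsWithRoots_of_eq_prod_fin hf, splitsWithRoots_of_eq_prod_fin hg,
      rootsPrec_map_range (Nat.le_succ n) le_rfl (fun k hk => ?_) (fun k hk => ?_)⟩
    · simpa [hk, Nat.lt_succ_of_lt hk] using (hrsr ⟨k, hk⟩).2
    · simpa [hk, Nat.succ_lt_succ_iff.mp hk] using (hrsr ⟨k, by omega⟩).1

theorem prec_of_rootsPrec {p q : ℝ[X]} {U W : Multiset ℝ} (hq : SplitsWithRoots q U)
    (hp : SplitsWithRoots p W) (h : RootsPrec U W) : Prec q p := by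
  obtain ⟨w, hw⟩ := exists_descEnum U
  obtain ⟨u, hu⟩ := exists_descEnum W
  obtain ⟨hnm, hmn, hwu, huw⟩ := h.interlace hw hu
  rw [hw.1, splitsWithRoots_map_range_iff] at hq
  rw [hu.1, splitsWithRoots_map_range_iff] at hp
  generalize Multiset.card U = n at *
  generalize Multiset.card W = m at *
  obtain rfl | rfl : m = n ∨ m = n + 1 := by omega
  · exact Or.inl ⟨m, fun i => u i, fun i => w i, hp, hq, fun i => hwu i i.2, huw⟩
  · exact Or.inr ⟨n, fun i => u i, fun i => w i, hp, hq, fun i => ⟨huw i (by omega), hwu i i.2⟩⟩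

theorem neg_one_pow_countP_mul_eval_prod_pos {U : Multiset ℝ} {x : ℝ} (hx : x ∉ U) :
    0 < (-1) ^ U.countP (x ≤ ·) * (U.map (X - C ·)).prod.eval x := by
  induction U using Multiset.induction_on with
  | empty => simp
  | cons a U ih =>
    rw [Multiset.mem_cons, not_or] at hx
    have hpos := ih hx.2
    rw [Multiset.countP_cons, Multiset.map_cons, Multiset.prod_cons, eval_mul]
    simp only [eval_sub, eval_X, eval_C]
    rcases lt_or_gt_of_ne hx.1 with hxa | hax
    · rw [if_pos hxa.le, pow_succ]
      nlinarith
    · rw [if_neg (not_le.mpr hax), add_zero]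
      nlinarith

theorem eval_prod_X_sub_C_pos_of_countP_eq_zero {U : Multiset ℝ} {x : ℝ}
    (h : U.countP (x ≤ ·) = 0) : 0 < (U.map (X - C ·)).prod.eval x := by
  have hx : x ∉ U := fun hx => by
    simp only [Multiset.countP_eq_zero] at h
    exact h x hx le_rfl
  simpa [h] using neg_one_pow_countP_mul_eval_prod_pos hx

theorem eval_prod_X_sub_C_of_mem {U : Multiset ℝ} {a : ℝ} (ha : a ∈ U) :
    (U.map (X - C ·)).prod.eval a = 0 :=
  (isRoot_of_mem_roots (by rwa [roots_multiset_prod_X_sub_C])).eq_zero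

theorem exists_gt_eval_pos {p : ℝ[X]} (hp : 0 < p.leadingCoeff) (x₀ : ℝ) :
    ∃ x, x₀ < x ∧ 0 < p.eval x := by
  rcases le_or_gt p.degree 0 with hdeg | hdeg
  · refine ⟨x₀ + 1, by linarith, ?_⟩
    rw [eq_C_of_degree_le_zero hdeg] at hp ⊢
    simpa using hp
  · obtain ⟨x, hx⟩ := (((p.tendsto_atTop_of_leadingCoeff_nonneg hdeg hp.le).eventually_gt_atTop
      0).and (Filter.eventually_gt_atTop x₀)).exists
    exact ⟨x, hx.2, hx.1⟩

theorem exists_lt_neg_one_pow_mul_eval_pos {p : ℝ[X]} (hp : 0 < p.leadingCoeff) (x₀ : ℝ) :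
    ∃ x, x < x₀ ∧ 0 < (-1) ^ p.natDegree * p.eval x := by
  set q := C ((-1) ^ p.natDegree) * p.comp (-X)
  have hq : q.leadingCoeff = p.leadingCoeff := by
    rw [leadingCoeff_mul, leadingCoeff_C, leadingCoeff_comp (by simp), leadingCoeff_neg,
      leadingCoeff_X, mul_left_comm, ← mul_pow, neg_one_mul, neg_neg, one_pow, mul_one]
  obtain ⟨y, hy, hpos⟩ := exists_gt_eval_pos (hq ▸ hp) (-x₀)
  exact ⟨-y, by linarith, by simpa [q] using hpos⟩

theorem exists_splitsWithRoots_of_sign_changes {p : ℝ[X]} {m : ℕ} (hdeg : p.natDegree ≤ m)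
    {lo hi : ℕ → ℝ} (hlohi : ∀ k < m, lo k < hi k) (hhilo : ∀ k, k + 1 < m → hi (k + 1) ≤ lo k)
    (hhi : ∀ k < m, 0 < (-1) ^ k * p.eval (hi k)) (hlo : ∀ k < m, (-1) ^ k * p.eval (lo k) < 0) :
    ∃ t : ℕ → ℝ, (∀ k < m, lo k < t k ∧ t k < hi k) ∧ SplitsWithRoots p ((range m).val.map t) := by
  have hroot : ∀ k, ∃ z, k < m → lo k < z ∧ z < hi k ∧ p.eval z = 0 := fun k => by
    by_cases hk : k < m
    · obtain ⟨z, hz, hz0⟩ := intermediate_value_Ioo (hlohi k hk).le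
        (f := fun x => (-1) ^ k * p.eval x) (by fun_prop) ⟨hlo k hk, hhi k hk⟩
      exact ⟨z, fun _ => ⟨hz.1, hz.2, by simpa using hz0⟩⟩
    · exact ⟨0, fun h => absurd h hk⟩
  choose t ht using hroot
  refine ⟨t, fun k hk => ⟨(ht k hk).1, (ht k hk).2.1⟩, ?_⟩
  rcases eq_or_ne p 0 with rfl | hp0
  · obtain rfl : m = 0 := by
      by_contra hm
      simpa using hhi 0 (Nat.pos_of_ne_zero hm)
    simp [SplitsWithRoots]
  have hanti : StrictAntiOn t (Set.Iic (m - 1)) := strictAntiOn_Iic_of_succ_lt fun k hk =>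
    calc t (k + 1) < hi (k + 1) := (ht (k + 1) (by omega)).2.1
      _ ≤ lo k := hhilo k (by omega)
      _ < t k := (ht k (by omega)).1
  have hnodup : ((range m).val.map t).Nodup :=
    (nodup _).map_on fun i hi j hj hij => hanti.injOn
      (by simp only [Set.mem_Iic]; have := mem_range.mp hi; omega)
      (by simp only [Set.mem_Iic]; have := mem_range.mp hj; omega) hij
  have hle : (range m).val.map t ≤ p.roots := (Multiset.le_iff_subset hnodup).mpr fun z hz => by
    obtain ⟨k, hk, rfl⟩ := Multiset.mem_map.mp hz
    exact (mem_roots hp0).mpr (ht k (mem_range.mp hk)).2.2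
  have hcard : Multiset.card p.roots ≤ m := (card_roots' p).trans hdeg
  have hroots := Multiset.eq_of_le_of_card_le hle (by simpa using hcard)
  rw [hroots]
  refine (C_leadingCoeff_mul_prod_multiset_X_sub_C (le_antisymm (card_roots' p) ?_)).symm
  rw [← hroots]
  simpa using hdeg

section Disjoint

variable {S R : Multiset ℝ}

theorem RootsPrec.neg_one_pow_mul_eval_pos (hSR : RootsPrec S R) (hdisj : Disjoint S R)
    {s r : ℕ → ℝ} (hs : DescEnum S s) (hr : DescEnum R r) :
    (∀ k < Multiset.card R, 0 < (-1) ^ k * (S.map (X - C ·)).prod.eval (r k)) ∧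
      ∀ k < Multiset.card S, 0 < (-1) ^ (k + 1) * (R.map (X - C ·)).prod.eval (s k) := by
  obtain ⟨hnm, hmn, hsr, hrs⟩ := hSR.strict_interlace hdisj hs hr
  constructor
  · intro k hk
    have hcount : S.countP (r k ≤ ·) = k := by
      have hle := Multiset.countP_le_card (r k ≤ ·) S
      have hlo : k = 0 ∨ k - 1 < S.countP (r k ≤ ·) := by
        rcases k with _ | k
        · exact Or.inl rfl
        · exact Or.inr ((hs.2 k (by omega) _).mp (hrs k hk).le)
      have hhi : ¬ k < S.countP (r k ≤ ·) := fun h =>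
        absurd ((hs.2 k (by omega) _).mpr h) (not_le.mpr (hsr k (by omega)))
      omega
    simpa [hcount] using neg_one_pow_countP_mul_eval_prod_pos
      (fun h => Multiset.disjoint_left.mp hdisj h (hr.mem hk))
  · intro k hk
    have hcount : R.countP (s k ≤ ·) = k + 1 := by
      have hle := Multiset.countP_le_card (s k ≤ ·) R
      have hlo := (hr.2 k (by omega) _).mp (hsr k hk).le
      have hhi : ¬ k + 1 < R.countP (s k ≤ ·) := fun h =>
        absurd ((hr.2 (k + 1) (by omega) _).mpr h) (not_le.mpr (hrs k (by omega)))
      omega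
    simpa [hcount] using neg_one_pow_countP_mul_eval_prod_pos
      (fun h => Multiset.disjoint_left.mp hdisj (hs.mem hk) h)

theorem RootsPrec.exists_splitsWithRoots_sub_of_disjoint (hSR : RootsPrec S R)
    (hdisj : Disjoint S R) {A B : ℝ} (hB : 0 < B)
    (hlead : 0 < (C A * (R.map (X - C ·)).prod - C B * (S.map (X - C ·)).prod).leadingCoeff) :
    ∃ T, SplitsWithRoots (C A * (R.map (X - C ·)).prod - C B * (S.map (X - C ·)).prod) T ∧
      RootsPrec R T ∧ RootsPrec S T := by
  set F := (R.map (X - C ·)).prod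
  set G := (S.map (X - C ·)).prod
  obtain ⟨r, hr⟩ := exists_descEnum R
  obtain ⟨s, hs⟩ := exists_descEnum S
  obtain ⟨hnm, hmn, hsr, hrs⟩ := hSR.strict_interlace hdisj hs hr
  obtain ⟨hGr, hFs⟩ := hSR.neg_one_pow_mul_eval_pos hdisj hs hr
  obtain ⟨M, hrM, hM⟩ := exists_gt_eval_pos hlead (r 0)
  have hA : 0 < A := by
    have hRM : R.countP (M ≤ ·) = 0 := hr.countP_eq_zero fun _ => hrM
    have hFM := eval_prod_X_sub_C_pos_of_countP_eq_zero hRM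
    have hGM := eval_prod_X_sub_C_pos_of_countP_eq_zero (U := S) (x := M)
      (by have := (hSR M).1; omega)
    simp only [eval_sub, eval_mul, eval_C] at hM
    by_contra! hA
    nlinarith
  have hdeg : (C A * F - C B * G).natDegree ≤ Multiset.card R := by
    refine (natDegree_sub_le _ _).trans (max_le ?_ ?_) <;>
      refine (natDegree_C_mul_le _ _).trans ?_ <;>
      simp only [F, G, natDegree_multiset_prod_X_sub_C_eq_card, hnm, le_rfl]
  obtain ⟨t, ht, hT⟩ := exists_splitsWithRoots_of_sign_changes hdeg (lo := r)
    (hi := fun | 0 => M | k + 1 => s k)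
    (fun k hk => by rcases k with _ | k; exacts [hrM, hrs k hk])
    (fun k hk => (hsr k (by omega)).le)
    (fun k hk => by
      rcases k with _ | k
      · simpa using hM
      · simp only [eval_sub, eval_mul, eval_C, G,
          eval_prod_X_sub_C_of_mem (hs.mem (k := k) (by omega)), mul_zero, sub_zero]
        nlinarith [hFs k (by omega)])
    (fun k hk => by
      simp only [eval_sub, eval_mul, eval_C, F, eval_prod_X_sub_C_of_mem (hr.mem hk), mul_zero,
        zero_sub]
      nlinarith [hGr k hk])
  refine ⟨_, hT, ?_, ?_⟩
  · have := rootsPrec_map_range le_rfl (Nat.le_succ _) (fun k hk => (ht k hk).1.le)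
      fun k hk => (ht (k + 1) hk).2.le.trans (hsr k (by omega)).le
    rwa [← hr.1] at this
  · have := rootsPrec_map_range hnm hmn
      (fun k hk => ((hsr k hk).trans (ht k (by omega)).1).le) fun k hk => (ht (k + 1) hk).2.le
    rwa [← hs.1] at this

theorem RootsPrec.exists_splitsWithRoots_add_of_disjoint (hSR : RootsPrec S R)
    (hdisj : Disjoint S R) {c d : ℝ} (hc : 0 < c) (hd : 0 < d) :
    ∃ V, SplitsWithRoots (C c * (R.map (X - C ·)).prod + C d * (S.map (X - C ·)).prod) V ∧
      RootsPrec S V ∧ RootsPrec V R := by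
  set F := (R.map (X - C ·)).prod
  set G := (S.map (X - C ·)).prod
  obtain ⟨r, hr⟩ := exists_descEnum R
  obtain ⟨s, hs⟩ := exists_descEnum S
  set m := Multiset.card R
  set n := Multiset.card S
  obtain ⟨hnm, hmn, hsr, hrs⟩ := hSR.strict_interlace hdisj hs hr
  obtain ⟨hGr, hFs⟩ := hSR.neg_one_pow_mul_eval_pos hdisj hs hr
  have hFdeg : F.natDegree = m := natDegree_multiset_prod_X_sub_C_eq_card R
  have hGdeg : G.natDegree = n := natDegree_multiset_prod_X_sub_C_eq_card S
  have hdeg : (C c * F + C d * G).natDegree ≤ m :=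
    (natDegree_add_le _ _).trans (max_le ((natDegree_C_mul_le _ _).trans hFdeg.le)
      ((natDegree_C_mul_le _ _).trans (hGdeg.le.trans hnm)))
  obtain ⟨x₁, hx₁⟩ : ∃ x, n < m → x < r n ∧ 0 < (-1) ^ m * (C c * F + C d * G).eval x := by
    by_cases hlt : n < m
    · have hlt' : (C d * G).natDegree < (C c * F).natDegree := by
        rwa [natDegree_C_mul hc.ne', natDegree_C_mul hd.ne', hFdeg, hGdeg]
      have hlead : (C c * F + C d * G).leadingCoeff = c := by
        rw [leadingCoeff_add_of_degree_lt' (degree_lt_degree hlt'),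
          leadingCoeff_C_mul_prod_X_sub_C]
      obtain ⟨x, hx, hpos⟩ := exists_lt_neg_one_pow_mul_eval_pos (hlead ▸ hc) (r n)
      rw [natDegree_add_eq_left_of_natDegree_lt hlt', natDegree_C_mul hc.ne', hFdeg] at hpos
      exact ⟨x, fun _ => ⟨hx, hpos⟩⟩
    · exact ⟨0, fun h => absurd h hlt⟩
  obtain ⟨v, hv, hV⟩ := exists_splitsWithRoots_of_sign_changes hdeg (hi := r)
    (lo := fun k => if k < n then s k else x₁)
    (fun k hk => by
      by_cases hkn : k < n
      · simpa [hkn] using hsr k hkn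
      · obtain rfl : k = n := by omega
        simpa [hkn] using (hx₁ hk).1)
    (fun k hk => by simpa [show k < n by omega] using (hrs k hk).le)
    (fun k hk => by
      simp only [eval_add, eval_mul, eval_C, F, eval_prod_X_sub_C_of_mem (hr.mem hk), mul_zero,
        zero_add]
      nlinarith [hGr k hk])
    (fun k hk => by
      by_cases hkn : k < n
      · simp only [hkn, if_true, eval_add, eval_mul, eval_C, G,
          eval_prod_X_sub_C_of_mem (hs.mem hkn), mul_zero, add_zero]
        have := hFs k hkn
        rw [pow_succ] at this
        nlinarith
      · have hpos := (hx₁ (by omega)).2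
        rw [show m = n + 1 by omega, pow_succ] at hpos
        simp only [show k = n by omega, lt_irrefl, if_false]
        linarith)
  have hlo : ∀ k < n, s k < v k := fun k hk => by simpa [hk] using (hv k (by omega)).1
  refine ⟨_, hV, ?_, ?_⟩
  · have := rootsPrec_map_range hnm hmn (fun k hk => (hlo k hk).le)
      fun k hk => ((hv (k + 1) hk).2.trans (hrs k hk)).le
    rwa [← hs.1] at this
  · have := rootsPrec_map_range le_rfl (Nat.le_succ _) (fun k hk => (hv k hk).2.le)
      fun k hk => ((hrs k hk).trans (hlo k (by omega))).le
    rwa [← hr.1] at this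

end Disjoint

section CommonRoots

variable {S R : Multiset ℝ}

theorem RootsPrec.exists_splitsWithRoots_sub (hSR : RootsPrec S R) {A B : ℝ} (hB : 0 ≤ B)
    (hlead : 0 < (C A * (R.map (X - C ·)).prod - C B * (S.map (X - C ·)).prod).leadingCoeff) :
    ∃ T, SplitsWithRoots (C A * (R.map (X - C ·)).prod - C B * (S.map (X - C ·)).prod) T ∧
      RootsPrec R T ∧ RootsPrec S T := by
  rcases hB.eq_or_lt with rfl | hB
  · simp only [map_zero, zero_mul, sub_zero]
    exact ⟨R, splitsWithRoots_C_mul_prod_X_sub_C A R, .refl R, hSR⟩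
  revert hlead
  refine RootsPrec.induction_on_common_root S R hSR (fun S R hSR hdisj hlead =>
    hSR.exists_splitsWithRoots_sub_of_disjoint hdisj hB hlead) (fun w S R _ ih hlead => ?_)
  have hfactor : C A * ((w ::ₘ R).map (X - C ·)).prod - C B * ((w ::ₘ S).map (X - C ·)).prod =
      (X - C w) * (C A * (R.map (X - C ·)).prod - C B * (S.map (X - C ·)).prod) := by
    simp only [Multiset.map_cons, Multiset.prod_cons]
    ring
  rw [hfactor] at hlead ⊢
  rw [leadingCoeff_mul, leadingCoeff_X_sub_C, one_mul] at hlead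
  obtain ⟨T, hT, hRT, hST⟩ := ih hlead
  exact ⟨w ::ₘ T, hT.X_sub_C_mul w, (RootsPrec.cons_iff w).mpr hRT,
    (RootsPrec.cons_iff w).mpr hST⟩

theorem RootsPrec.exists_splitsWithRoots_add (hSR : RootsPrec S R) {c d : ℝ}
    (hc : 0 ≤ c) (hd : 0 ≤ d) :
    ∃ V, SplitsWithRoots (C c * (R.map (X - C ·)).prod + C d * (S.map (X - C ·)).prod) V ∧
      RootsPrec S V ∧ RootsPrec V R := by
  rcases hc.eq_or_lt with rfl | hc
  · simp only [map_zero, zero_mul, zero_add]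
    exact ⟨S, splitsWithRoots_C_mul_prod_X_sub_C d S, .refl S, hSR⟩
  rcases hd.eq_or_lt with rfl | hd
  · simp only [map_zero, zero_mul, add_zero]
    exact ⟨R, splitsWithRoots_C_mul_prod_X_sub_C c R, hSR, .refl R⟩
  refine RootsPrec.induction_on_common_root S R hSR (fun S R hSR hdisj =>
    hSR.exists_splitsWithRoots_add_of_disjoint hdisj hc hd) (fun w S R _ ih => ?_)
  obtain ⟨V, hV, hSV, hVR⟩ := ih
  refine ⟨w ::ₘ V, ?_, (RootsPrec.cons_iff w).mpr hSV, (RootsPrec.cons_iff w).mpr hVR⟩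
  convert hV.X_sub_C_mul w using 1
  simp only [Multiset.map_cons, Multiset.prod_cons]
  ring

end CommonRoots

theorem Standard.leadingCoeff_nonneg {f : ℝ[X]} (hf : Standard f) : 0 ≤ f.leadingCoeff := by
  rcases hf with rfl | hf
  · simp
  · exact hf.le

theorem cor_abcd_ii_general (f g : Polynomial ℝ) (a b c d : ℝ)
    (hb : 0 ≤ b) (hc : 0 ≤ c) (hd : 0 ≤ d)
    (hfs : Standard f) (hgs : Standard g)
    (hgf : Prec g f)
    (hstd : Standard (Polynomial.C a * f - Polynomial.C b * g)) :
    Prec (Polynomial.C c * f + Polynomial.C d * g) (Polynomial.C a * f - Polynomial.C b * g) ∧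
    Prec f (Polynomial.C a * f - Polynomial.C b * g) ∧
    Prec g (Polynomial.C a * f - Polynomial.C b * g) := by
  obtain ⟨R, S, hfR, hgS, hSR⟩ := hgf.exists_rootsPrec
  have hα := hfs.leadingCoeff_nonneg
  have hβ := hgs.leadingCoeff_nonneg
  obtain ⟨V, hV, hSV, hVR⟩ := hSR.exists_splitsWithRoots_add (mul_nonneg hc hα) (mul_nonneg hd hβ)
  rw [← hfR.C_mul_eq, ← hgS.C_mul_eq] at hV
  -- for `a f - b g = 0` any root multiset will do; `R` keeps the relations true
  obtain ⟨T, hT, hRT, hST⟩ :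
      ∃ T, SplitsWithRoots (C a * f - C b * g) T ∧ RootsPrec R T ∧ RootsPrec S T := by
    rcases hstd with h0 | hpos
    · exact ⟨R, by simp [h0, SplitsWithRoots], .refl R, hSR⟩
    · rw [hfR.C_mul_eq, hgS.C_mul_eq] at hpos ⊢
      exact hSR.exists_splitsWithRoots_sub (mul_nonneg hb hβ) hpos
  exact ⟨prec_of_rootsPrec hV hT (hSV.of_between hVR hRT hST), prec_of_rootsPrec hfR hT hRT,
    prec_of_rootsPrec hgS hT hST⟩

theorem cor_abcd_ii (f g : Polynomial ℝ) (a b c d : ℝ)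
    (ha : 0 ≤ a) (hb : 0 ≤ b) (hc : 0 ≤ c) (hd : 0 ≤ d)
    (hfs : Standard f) (hgs : Standard g)
    (hf : RealRooted f) (hg : RealRooted g) (hgf : Prec g f)
    (hstd : Standard (Polynomial.C a * f - Polynomial.C b * g)) :
    Prec (Polynomial.C c * f + Polynomial.C d * g) (Polynomial.C a * f - Polynomial.C b * g) ∧
    Prec f (Polynomial.C a * f - Polynomial.C b * g) ∧
    Prec g (Polynomial.C a * f - Polynomial.C b * g) :=
  cor_abcd_ii_general f g a b c d hb hc hd hfs hgs hgf hstd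
end

section
/- Let f, g ∈ PF (real polynomials with nonnegative coefficients and only real zeros) with g interlacing f, and let a, b, c, d be real numbers with ad ≥ bc. Then (ax+b) f(x) + x(cx+d) g(x) has only real zeros. -/
open Polynomial Finset

/-!
For `z` in the open upper half-plane write `z g(z) / f(z) = (B / A) ∏ⱼ (z - σⱼ) / (z - rⱼ)`, where
`A`, `B` are the leading coefficients and `σ = (0, s₀, …, sₙ₋₁)`. Nonnegative coefficients force `r₀ ≤ 0`, so interlacing gives
`rⱼ ≤ σⱼ ≤ rⱼ₋₁`. Since `t ↦ arg (z - t)` is increasing, every factor has argument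
`arg (z - σⱼ) - arg (z - rⱼ) ≥ 0`, and these telescope to at most `arg z - arg (z - rₙ) < π`.
Hence `z g / f` maps the upper half-plane into itself, unless all the `rⱼ = σⱼ`, in which case
`f = A x ∏ (x - sᵢ)` and the polynomial factors into linear terms. A zero with `Im z > 0` gives
`(a z + b) + (c z + d) · z g(z) / f(z) = 0`. Multiplying by `conj (c z + d)` and taking imaginary
parts gives `(a d - b c) Im z + |c z + d|² Im (z g / f) = 0` with both terms nonnegative, which
forces `c z + d = 0` and then `a = b = c = d = 0`.
-/

lemma Fin.sum_sub_le_sub_of_succ_le_castSucc {α : Type*} [AddCommGroup α] [PartialOrder α]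
    [IsOrderedAddMonoid α] {n : ℕ} {p q : Fin (n + 1) → α}
    (h : ∀ i : Fin n, p i.succ ≤ q i.castSucc) :
    ∑ j, (p j - q j) ≤ p 0 - q (Fin.last n) := by
  rw [sum_sub_distrib, Fin.sum_univ_succ, Fin.sum_univ_castSucc]
  have hsum : ∑ i : Fin n, p i.succ ≤ ∑ i : Fin n, q i.castSucc := sum_le_sum fun i _ => h i
  calc _ = p 0 - q (Fin.last n) + (∑ i : Fin n, p i.succ - ∑ i : Fin n, q i.castSucc) := by abel
    _ ≤ p 0 - q (Fin.last n) := add_le_of_nonpos_right (sub_nonpos.mpr hsum)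

namespace Complex

open Real ComplexConjugate

lemma arg_pos_of_im_pos {z : ℂ} (hz : 0 < z.im) : 0 < arg z :=
  (arg_nonneg_iff.mpr hz.le).lt_of_ne fun h => hz.ne' (arg_eq_zero_iff.mp h.symm).2

lemma arg_lt_pi_of_im_pos {z : ℂ} (hz : 0 < z.im) : arg z < π :=
  arg_lt_pi_iff.mpr (Or.inr hz.ne')

lemma im_pos_of_arg_pos_of_arg_lt_pi {z : ℂ} (h₀ : 0 < arg z) (hπ : arg z < π) : 0 < z.im := by
  have hz : z ≠ 0 := by rintro rfl; simp at h₀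
  rw [← norm_mul_sin_arg]
  exact mul_pos (norm_pos_iff.mpr hz) (Real.sin_pos_of_pos_of_lt_pi h₀ hπ)

lemma sub_ofReal_ne_zero_of_im_pos {z : ℂ} (hz : 0 < z.im) (t : ℝ) : z - t ≠ 0 :=
  fun h => by simp [sub_eq_zero.mp h] at hz

lemma arg_div_of_im_pos {x y : ℂ} (hx : 0 < x.im) (hy : 0 < y.im) :
    arg (x / y) = arg x - arg y := by
  have hx₀ : x ≠ 0 := by rintro rfl; simp at hx
  have hy₀ : y ≠ 0 := by rintro rfl; simp at hy
  rw [← arg_coe_angle_toReal_eq_arg, arg_div_coe_angle hx₀ hy₀, ← Real.Angle.coe_sub,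
    Real.Angle.toReal_coe_eq_self_iff_mem_Ioc]
  constructor <;> linarith [arg_pos_of_im_pos hx, arg_lt_pi_of_im_pos hx,
    arg_pos_of_im_pos hy, arg_lt_pi_of_im_pos hy]

lemma strictMono_arg_sub_ofReal {z : ℂ} (hz : 0 < z.im) :
    StrictMono fun t : ℝ => arg (z - t) := by
  intro r s hrs
  have him : 0 < ((z - s) / (z - r)).im := by
    rw [div_im]
    simp only [sub_im, ofReal_im, sub_zero, sub_re, ofReal_re, ← sub_div]
    exact div_pos (by nlinarith) (normSq_pos.mpr (sub_ofReal_ne_zero_of_im_pos hz r))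
  have := arg_div_of_im_pos (x := z - s) (y := z - r) (by simpa) (by simpa)
  show arg (z - r) < arg (z - s)
  linarith [arg_pos_of_im_pos him]

lemma arg_prod_of_sum_arg_lt_pi {ι : Type*} (s : Finset ι) {w : ι → ℂ}
    (hw₀ : ∀ i ∈ s, w i ≠ 0) (hw : ∀ i ∈ s, 0 ≤ arg (w i)) (hsum : ∑ i ∈ s, arg (w i) < π) :
    arg (∏ i ∈ s, w i) = ∑ i ∈ s, arg (w i) := by
  classical
  induction s using Finset.induction_on with
  | empty => simp
  | insert a s ha ih =>
    simp only [mem_insert, forall_eq_or_imp] at hw₀ hw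
    rw [sum_insert ha] at hsum
    have ih' := ih hw₀.2 hw.2 (by linarith [hw.1])
    have hmem : arg (w a) + arg (∏ i ∈ s, w i) ∈ Set.Ioc (-π) π := by
      rw [ih']
      constructor <;> linarith [hw.1, sum_nonneg hw.2, pi_pos]
    rw [prod_insert ha, sum_insert ha, arg_mul hw₀.1 (prod_ne_zero_iff.mpr hw₀.2) hmem, ih']

lemma im_prod_div_sub_pos {n : ℕ} {z : ℂ} (hz : 0 < z.im) {ρ σ : Fin (n + 1) → ℝ}
    (hle : ∀ j, ρ j ≤ σ j) (hchain : ∀ i : Fin n, σ i.succ ≤ ρ i.castSucc)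
    (hlt : ∃ j, ρ j < σ j) :
    0 < (∏ j, (z - σ j) / (z - ρ j)).im := by
  set θ : ℝ → ℝ := fun t => arg (z - t)
  have hθ : StrictMono θ := strictMono_arg_sub_ofReal hz
  have hθ_im : ∀ t : ℝ, 0 < (z - t).im := fun t => by simpa using hz
  have harg : ∀ j, arg ((z - σ j) / (z - ρ j)) = θ (σ j) - θ (ρ j) := fun j =>
    arg_div_of_im_pos (hθ_im _) (hθ_im _)
  have hterm_nonneg : ∀ j, 0 ≤ θ (σ j) - θ (ρ j) := fun j => sub_nonneg.mpr (hθ.monotone (hle j))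
  have hsum_lt : ∑ j, (θ (σ j) - θ (ρ j)) < π := by
    have htelescope : ∑ j, (θ (σ j) - θ (ρ j)) ≤ θ (σ 0) - θ (ρ (Fin.last n)) :=
      Fin.sum_sub_le_sub_of_succ_le_castSucc fun i => hθ.monotone (hchain i)
    have hσ : θ (σ 0) < π := arg_lt_pi_of_im_pos (hθ_im _)
    have hρ : 0 < θ (ρ (Fin.last n)) := arg_pos_of_im_pos (hθ_im _)
    linarith
  have hsum_pos : 0 < ∑ j, (θ (σ j) - θ (ρ j)) := by
    obtain ⟨j, hj⟩ := hlt
    exact sum_pos' (fun j _ => hterm_nonneg j) ⟨j, mem_univ j, sub_pos.mpr (hθ hj)⟩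
  have hprod : arg (∏ j, (z - σ j) / (z - ρ j)) = ∑ j, (θ (σ j) - θ (ρ j)) := by
    simp only [← harg] at hterm_nonneg hsum_lt ⊢
    refine arg_prod_of_sum_arg_lt_pi univ (fun j _ => ?_) (fun j _ => hterm_nonneg j) hsum_lt
    exact div_ne_zero (sub_ofReal_ne_zero_of_im_pos hz _) (sub_ofReal_ne_zero_of_im_pos hz _)
  exact im_pos_of_arg_pos_of_arg_lt_pi (hprod ▸ hsum_pos) (hprod ▸ hsum_lt)

lemma eq_zero_of_ofReal_mul_add_ofReal_eq_zero {a b : ℝ} {z : ℂ} (hz : z.im ≠ 0)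
    (h : a * z + b = 0) : a = 0 ∧ b = 0 := by
  have him := congrArg im h
  have hre := congrArg re h
  simp only [add_im, mul_im, ofReal_re, ofReal_im, zero_mul, add_zero, zero_im, add_re, mul_re,
    sub_zero, zero_re] at him hre
  have ha : a = 0 := (mul_eq_zero.mp him).resolve_right hz
  exact ⟨ha, by simpa [ha] using hre⟩

lemma eq_zero_of_mul_add_mul_eq_zero_of_im_pos {a b c d : ℝ} (h : b * c ≤ a * d) {z w : ℂ}
    (hz : 0 < z.im) (hw : 0 < w.im) (heq : (a * z + b) + (c * z + d) * w = 0) :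
    a = 0 ∧ b = 0 ∧ c = 0 ∧ d = 0 := by
  set M : ℂ := c * z + d with hM_def
  have hcross : ((a * z + b) * conj M).im = (a * d - b * c) * z.im := by
    simp only [hM_def, mul_im, add_re, add_im, mul_re, ofReal_re, ofReal_im, map_add, map_mul,
      conj_ofReal, conj_re, conj_im]
    ring
  have him : (a * d - b * c) * z.im + normSq M * w.im = 0 := by
    have := congrArg (fun u => (u * conj M).im) heq
    rwa [add_mul, mul_right_comm M w, mul_conj, zero_mul, zero_im, add_im, hcross,
      im_ofReal_mul] at this
  have hM : M = 0 := by
    by_contra hM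
    have := normSq_pos.mpr hM
    nlinarith [mul_pos this hw]
  obtain ⟨rfl, rfl⟩ := eq_zero_of_ofReal_mul_add_ofReal_eq_zero hz.ne' hM
  obtain ⟨rfl, rfl⟩ := eq_zero_of_ofReal_mul_add_ofReal_eq_zero hz.ne' (by simpa [hM] using heq)
  simp

end Complex

namespace Polynomial

lemma splits_of_forall_im_pos_aeval_ne_zero {p : ℝ[X]}
    (h : ∀ z : ℂ, 0 < z.im → aeval z p ≠ 0) : p.Splits := by
  refine Splits.of_splits_map (algebraMap ℝ ℂ) (IsAlgClosed.splits _) fun z hz => ?_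
  have hroot : aeval z p = 0 := by
    rw [mem_roots', IsRoot.def, eval_map_algebraMap] at hz
    exact hz.2
  have him : z.im = 0 := by
    rcases lt_trichotomy z.im 0 with hneg | hzero | hpos
    · refine absurd ?_ (h (starRingEnd ℂ z) (by simpa using hneg))
      rw [aeval_conj, hroot, map_zero]
    · exact hzero
    · exact absurd hroot (h z hpos)
  exact ⟨z.re, Complex.ext (by simp) (by simp [him])⟩

lemma splits_C_mul_X_add_C {K : Type*} [Field K] (a b : K) : (C a * X + C b).Splits :=
  Splits.of_natDegree_le_one natDegree_linear_le

lemma eval_pos_of_coeff_nonneg {R : Type*} [CommSemiring R] [LinearOrder R]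
    [IsStrictOrderedRing R] {p : R[X]} (hp : ∀ i, 0 ≤ p.coeff i) (hp₀ : p ≠ 0) {t : R}
    (ht : 0 < t) :
    0 < p.eval t := by
  rw [eval_eq_sum_range]
  refine sum_pos' (fun i _ => mul_nonneg (hp i) (pow_nonneg ht.le i)) ⟨p.natDegree,
    self_mem_range_succ _, mul_pos ?_ (pow_pos ht _)⟩
  exact (hp _).lt_of_ne' (leadingCoeff_ne_zero.mpr hp₀)

lemma nonpos_of_isRoot_of_coeff_nonneg {R : Type*} [CommSemiring R] [LinearOrder R]
    [IsStrictOrderedRing R] {p : R[X]} (hp : ∀ i, 0 ≤ p.coeff i) (hp₀ : p ≠ 0) {x : R}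
    (hx : p.IsRoot x) : x ≤ 0 :=
  not_lt.mp fun hpos => (eval_pos_of_coeff_nonneg hp hp₀ hpos).ne' hx

lemma im_mul_aeval_div_aeval_pos {f g : ℝ[X]} {n : ℕ} {r : Fin (n + 1) → ℝ} {s : Fin n → ℝ}
    (hf : f = C f.leadingCoeff * ∏ i, (X - C (r i)))
    (hg : g = C g.leadingCoeff * ∏ i, (X - C (s i)))
    (hf₀ : 0 < f.leadingCoeff) (hg₀ : 0 < g.leadingCoeff)
    (hle : ∀ j, r j ≤ (Fin.cons 0 s : Fin (n + 1) → ℝ) j) (hchain : ∀ i, s i ≤ r i.castSucc)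
    (hlt : ∃ j, r j < (Fin.cons 0 s : Fin (n + 1) → ℝ) j) {z : ℂ} (hz : 0 < z.im) :
    0 < (z * aeval z g / aeval z f).im := by
  have hr : ∏ j, (z - r j) ≠ 0 :=
    prod_ne_zero_iff.mpr fun j _ => Complex.sub_ofReal_ne_zero_of_im_pos hz _
  have hquot : z * aeval z g / aeval z f = ((g.leadingCoeff / f.leadingCoeff : ℝ) : ℂ) *
      ∏ j, (z - ((Fin.cons 0 s : Fin (n + 1) → ℝ) j : ℂ)) / (z - r j) := by
    rw [prod_div_distrib, Fin.prod_univ_succ]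
    conv_lhs => rw [hf, hg]
    simp only [map_mul, aeval_C, Complex.coe_algebraMap, map_prod, aeval_sub, aeval_X,
      Complex.ofReal_div, Fin.cons_zero, Complex.ofReal_zero, sub_zero, Fin.cons_succ]
    field_simp
  rw [hquot, Complex.im_ofReal_mul]
  exact mul_pos (div_pos hg₀ hf₀)
    (Complex.im_prod_div_sub_pos hz hle (fun i => by simpa using hchain i) hlt)

lemma splits_of_eq_C_mul_X_mul_of_eq_C_mul {f g P : ℝ[X]} {α β : ℝ} (hP : P.Splits)
    (hf : f = C α * (X * P)) (hg : g = C β * P) (a b c d : ℝ) :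
    ((C a * X + C b) * f + X * (C c * X + C d) * g).Splits := by
  convert (Splits.X.mul hP).mul (splits_C_mul_X_add_C (a * α + c * β) (b * α + d * β)) using 1
  rw [hf, hg, C_add, C_add, C_mul, C_mul, C_mul, C_mul]
  ring

lemma splits_of_im_mul_aeval_div_aeval_pos {f g : ℝ[X]} {a b c d : ℝ} (h : b * c ≤ a * d)
    (hfg : ∀ z : ℂ, 0 < z.im → 0 < (z * aeval z g / aeval z f).im) :
    ((C a * X + C b) * f + X * (C c * X + C d) * g).Splits := by
  by_cases hF : (C a * X + C b) * f + X * (C c * X + C d) * g = 0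
  · exact hF ▸ Splits.zero
  refine splits_of_forall_im_pos_aeval_ne_zero fun z hz hroot => hF ?_
  have hw := hfg z hz
  have hfz : aeval z f ≠ 0 := fun h0 => by simp [h0] at hw
  obtain ⟨rfl, rfl, rfl, rfl⟩ := Complex.eq_zero_of_mul_add_mul_eq_zero_of_im_pos h hz hw (by
    simp only [map_add, map_mul, aeval_C, Complex.coe_algebraMap, aeval_X] at hroot
    field_simp
    linear_combination hroot)
  simp

end Polynomial

theorem wang_yeh_cor (f g : Polynomial ℝ) (a b c d : ℝ)
    (hf : PFpoly f) (hg : PFpoly g) (hgf : Interlaces g f)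
    (h : b * c ≤ a * d) :
    RealRooted ((Polynomial.C a * Polynomial.X + Polynomial.C b) * f +
      Polynomial.X * (Polynomial.C c * Polynomial.X + Polynomial.C d) * g) := by
  rw [RealRooted, ← splits_iff_card_roots]
  rcases eq_or_ne f 0 with rfl | hf₀
  · simpa using (Splits.X.mul (splits_C_mul_X_add_C c d)).mul (splits_iff_card_roots.mpr hg.2)
  rcases eq_or_ne g 0 with rfl | hg₀
  · simpa using (splits_C_mul_X_add_C a b).mul (splits_iff_card_roots.mpr hf.2)
  obtain ⟨n, r, s, hf_eq, hg_eq, hrs⟩ := hgf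
  set σ : Fin (n + 1) → ℝ := Fin.cons 0 s
  have hr₀ : r 0 ≤ 0 := nonpos_of_isRoot_of_coeff_nonneg hf.1 hf₀ <| dvd_iff_isRoot.mp <|
    hf_eq ▸ dvd_mul_of_dvd_right (dvd_prod_of_mem _ (mem_univ 0)) _
  have hle : ∀ j, r j ≤ σ j := Fin.cases hr₀ fun i => (hrs i).1
  by_cases hdeg : ∀ j, r j = σ j
  · exact splits_of_eq_C_mul_X_mul_of_eq_C_mul (α := f.leadingCoeff)
      (Splits.prod fun i _ => Splits.X_sub_C (s i))
      (hf_eq.trans (by simp [hdeg, σ, Fin.prod_univ_succ])) hg_eq a b c d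
  obtain ⟨j, hj⟩ := not_forall.mp hdeg
  exact splits_of_im_mul_aeval_div_aeval_pos h fun z hz => im_mul_aeval_div_aeval_pos hf_eq hg_eq
    ((hf.1 _).lt_of_ne' (leadingCoeff_ne_zero.mpr hf₀))
    ((hg.1 _).lt_of_ne' (leadingCoeff_ne_zero.mpr hg₀)) hle (fun i => (hrs i).2)
    ⟨j, (hle j).lt_of_ne hj⟩ hz
end

section
/- The polynomial u(x) = 8(10 + 339x + 2855x² + 2736x³ + 972x⁴) does not have all real zeros. -/
open Polynomial Finset

/-!
If `u` had only real zeros, the sum of their fourth powers would be nonnegative. By Vieta's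
formulas and Newton's identities this power sum is a polynomial in the coefficients of `u`,
and for `u` it equals `-38994775/4251528`.
-/

/-- Newton's identity for four variables. -/
theorem Multiset.sum_map_pow_four_of_card_eq_four {R : Type*} [CommRing R] {s : Multiset R}
    (hs : Multiset.card s = 4) :
    (s.map (· ^ 4)).sum = s.esymm 1 ^ 4 - 4 * s.esymm 1 ^ 2 * s.esymm 2 + 2 * s.esymm 2 ^ 2
      + 4 * s.esymm 1 * s.esymm 3 - 4 * s.esymm 4 := by
  obtain ⟨a, b, c, d, rfl⟩ := Multiset.card_eq_four.mp hs
  simp only [insert_eq_cons, map_cons, map_singleton, sum_cons, sum_singleton, esymm, powersetCard_cons,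
    zero_add, powersetCard_one, powersetCard_zero_left, cons_zero, singleton_add, cons_add, prod_singleton,
    Nat.reduceAdd, card_singleton, Order.lt_two_iff, Std.le_refl, powersetCard_eq_empty, add_cons,
    prod_cons, card_cons, Nat.lt_add_one]
  ring

theorem Polynomial.coeff_four_pow_mul_sum_roots_pow_four {R : Type*} [CommRing R] [IsDomain R]
    {p : R[X]} (hroots : Multiset.card p.roots = p.natDegree) (hdeg : p.natDegree = 4) :
    p.coeff 4 ^ 4 * (p.roots.map (· ^ 4)).sum = p.coeff 3 ^ 4
      - 4 * p.coeff 4 * p.coeff 3 ^ 2 * p.coeff 2 + 2 * p.coeff 4 ^ 2 * p.coeff 2 ^ 2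
      + 4 * p.coeff 4 ^ 2 * p.coeff 3 * p.coeff 1 - 4 * p.coeff 4 ^ 3 * p.coeff 0 := by
  have vieta (k : ℕ) (hk : k ≤ 4) :
      p.coeff k = p.leadingCoeff * (-1) ^ (4 - k) * p.roots.esymm (4 - k) := by
    rw [← hdeg]
    exact coeff_eq_esymm_roots_of_card hroots (hdeg ▸ hk)
  have hlead : p.coeff 4 = p.leadingCoeff := by rw [leadingCoeff, hdeg]
  rw [vieta 0 (by norm_num), vieta 1 (by norm_num), vieta 2 (by norm_num), vieta 3 (by norm_num),
    hlead, Multiset.sum_map_pow_four_of_card_eq_four (hroots.trans hdeg)]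
  ring

theorem RealRooted.quartic_coeff_nonneg {f : ℝ[X]} (hf : RealRooted f) (hdeg : f.natDegree = 4) :
    0 ≤ f.coeff 3 ^ 4
      - 4 * f.coeff 4 * f.coeff 3 ^ 2 * f.coeff 2 + 2 * f.coeff 4 ^ 2 * f.coeff 2 ^ 2
      + 4 * f.coeff 4 ^ 2 * f.coeff 3 * f.coeff 1 - 4 * f.coeff 4 ^ 3 * f.coeff 0 := by
  rw [← coeff_four_pow_mul_sum_roots_pow_four hf hdeg]
  refine mul_nonneg (by positivity) (Multiset.sum_nonneg fun _ hx => ?_)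
  obtain ⟨r, -, rfl⟩ := Multiset.mem_map.mp hx
  positivity

theorem stahl_counterexample :
    ¬ RealRooted (Polynomial.C (8 : ℝ) *
      (Polynomial.C 10 + Polynomial.C 339 * Polynomial.X +
       Polynomial.C 2855 * Polynomial.X ^ 2 + Polynomial.C 2736 * Polynomial.X ^ 3 +
       Polynomial.C 972 * Polynomial.X ^ 4)) := by
  intro hroots
  have hsum := hroots.quartic_coeff_nonneg (by compute_degree!)
  norm_num [coeff_X_pow, coeff_C, coeff_X] at hsum
end
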